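/- Let n ≥ 2r and let A = {a_1<⋯<a_r} ∈ Binom([n],r). Then there exists an s with 1 ≤ s ≤ r such that A ≺ [s, 2s−1] if and only if the pair A, A is cross intersecting. -/

import Mathlib

open Finset

/-- The `i`-th smallest element of a finite set of naturals (1-indexed);
    `0` if out of range. -/
def nthEl (A : Finset ℕ) (i : ℕ) : ℕ := (A.sort (· ≤ ·)).getD (i - 1) 0

/-- `A ≺ C` : `C = {c_1 < ⋯ < c_k}` with `k ≤ |A|` and `a_i ≤ c_i` for `1 ≤ i ≤ k`. -/
def SetPrec (A C : Finset ℕ) : Prop :=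
  C.card ≤ A.card ∧ ∀ i ∈ Finset.Icc 1 C.card, nthEl A i ≤ nthEl C i

instance (A C : Finset ℕ) : Decidable (SetPrec A C) := by
  unfold SetPrec; infer_instance

/-- The compression order: `A ≤ B` for sets of the same size, `a_i ≤ b_i` for all `i`. -/
def SetLE (A B : Finset ℕ) : Prop :=
  A.card = B.card ∧ ∀ i ∈ Finset.Icc 1 A.card, nthEl A i ≤ nthEl B i

instance (A B : Finset ℕ) : Decidable (SetLE A B) := by
  unfold SetLE; infer_instance

/-- `Binom([n], r)`: the family of `r`-element subsets of `[n] = {1, …, n}`. -/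
def binomF (n r : ℕ) : Finset (Finset ℕ) := (Finset.Icc 1 n).powersetCard r

/-- `𝒜(X) = {A ∈ 𝒜 : A ∩ X ≠ ∅}`. -/
def famX (𝒜 : Finset (Finset ℕ)) (X : Finset ℕ) : Finset (Finset ℕ) :=
  𝒜.filter fun A => (A ∩ X).Nonempty

/-- The star `𝒮_{n,r} = {A ∈ Binom([n],r) : 1 ∈ A}`. -/
def starF (n r : ℕ) : Finset (Finset ℕ) := (binomF n r).filter fun A => 1 ∈ A

/-- A family is intersecting if any two members meet. -/
def IntersectingF (𝒜 : Finset (Finset ℕ)) : Prop :=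
  ∀ A ∈ 𝒜, ∀ B ∈ 𝒜, (A ∩ B).Nonempty

/-- A family `𝒜 ⊆ Binom([n],r)` is compressed if `A ∈ 𝒜`, `B ∈ Binom([n],r)`, `B ≤ A`
    imply `B ∈ 𝒜`. -/
def CompressedF (n r : ℕ) (𝒜 : Finset (Finset ℕ)) : Prop :=
  ∀ A ∈ 𝒜, ∀ B ∈ binomF n r, SetLE B A → B ∈ 𝒜

/-- `F(r, n, 𝒢) = {A ∈ Binom([n],r) : A ≺ G for some G ∈ 𝒢}`. -/
def genF (r n : ℕ) (𝒢 : Finset (Finset ℕ)) : Finset (Finset ℕ) :=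
  (binomF n r).filter fun A => ∃ G ∈ 𝒢, SetPrec A G

/-- `𝒜_{n,r,s} = F(r, n, {[s, 2s-1]})`. -/
def Anrs (n r s : ℕ) : Finset (Finset ℕ) := genF r n {Finset.Icc s (2 * s - 1)}

/-- `X ⊆ [2,n]` is EKR for parameters `(n, r)` if `|𝒜(X)| ≤ |𝒮_{n,r}(X)|` for every
    compressed intersecting family `𝒜 ⊆ Binom([n],r)`. -/
def IsEKR (n r : ℕ) (X : Finset ℕ) : Prop :=
  X ⊆ Finset.Icc 2 n ∧
  ∀ 𝒜 ⊆ binomF n r, CompressedF n r 𝒜 → IntersectingF 𝒜 →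
    (famX 𝒜 X).card ≤ (famX (starF n r) X).card

/-- `X` is eventually EKR for `r` if it is EKR for `(n, r)` for all sufficiently large `n`. -/
def EventuallyEKR (r : ℕ) (X : Finset ℕ) : Prop :=
  ∃ N : ℕ, ∀ n ≥ N, IsEKR n r X

/-- `A` and `B` (r-element subsets of `[n]`) are cross intersecting if `C ∩ D ≠ ∅`
    for every `C ≤ A` and `D ≤ B`. -/
def CrossInt (n r : ℕ) (A B : Finset ℕ) : Prop :=
  ∀ C ∈ binomF n r, ∀ D ∈ binomF n r, SetLE C A → SetLE D B → (C ∩ D).Nonempty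

lemma nthEl_eq_get (A : Finset ℕ) (i : ℕ) (h1 : 1 ≤ i) (h2 : i ≤ A.card) :
    nthEl A i = (A.sort (· ≤ ·)).get ⟨i - 1, by rw [Finset.length_sort]; omega⟩ := by
  unfold nthEl
  rw [List.getD_eq_getElem _ _ (by rw [Finset.length_sort]; omega), List.get_eq_getElem]

lemma nthEl_mem (A : Finset ℕ) (i : ℕ) (h1 : 1 ≤ i) (h2 : i ≤ A.card) : nthEl A i ∈ A := by
  rw [nthEl_eq_get A i h1 h2]
  exact (Finset.mem_sort _).1 (List.get_mem _ _)

lemma nthEl_lt (A : Finset ℕ) (i j : ℕ) (h1 : 1 ≤ i) (hij : i < j) (hj : j ≤ A.card) :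
    nthEl A i < nthEl A j := by
  rw [nthEl_eq_get A i h1 (by omega), nthEl_eq_get A j (by omega) hj]
  exact (A.sortedLT_sort) (by simp [Fin.lt_def]; omega)

lemma nthEl_gap (A : Finset ℕ) (i j : ℕ) (h1 : 1 ≤ i) (hij : i ≤ j) (hj : j ≤ A.card) :
    nthEl A i + (j - i) ≤ nthEl A j := by
  induction j, hij using Nat.le_induction with
  | base => simp
  | succ m hm ih =>
    have h2 := ih (by omega)
    have h3 : nthEl A m < nthEl A (m + 1) := nthEl_lt A m (m + 1) (by omega) (by omega) hj
    omega

lemma nthEl_image (f : ℕ → ℕ) (hf : StrictMono f) (r : ℕ) (i : ℕ) (h1 : 1 ≤ i) (h2 : i ≤ r) :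
    nthEl ((Finset.range r).image f) i = f (i - 1) := by
  set l : List ℕ := (List.range r).map f with hl
  have hsort : l.Pairwise (· < ·) :=
    List.pairwise_map.mpr ((List.pairwise_lt_range).imp fun h => hf h)
  have hnd : l.Nodup := hsort.imp Nat.ne_of_lt
  have htf : l.toFinset = (Finset.range r).image f := by
    ext x; simp [hl]
  have hse : Finset.sort l.toFinset (· ≤ ·) = l := (List.toFinset_sort (r := (· ≤ ·)) hnd).mpr (hsort.imp Nat.le_of_lt)
  unfold nthEl
  rw [← htf, hse, hl]
  have hlen : i - 1 < (List.range r).length := by simp; omega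
  rw [List.getD_eq_getElem _ _ (by simpa using hlen), List.getElem_map, List.getElem_range]

lemma card_image_strictMono (f : ℕ → ℕ) (hf : StrictMono f) (r : ℕ) :
    ((Finset.range r).image f).card = r := by
  rw [Finset.card_image_of_injective _ hf.injective, Finset.card_range]

lemma Icc_eq_image (s : ℕ) (h1 : 1 ≤ s) :
    Finset.Icc s (2 * s - 1) = (Finset.range s).image (fun k => s + k) := by
  ext x
  simp only [Finset.mem_Icc, Finset.mem_image, Finset.mem_range]
  constructor
  · rintro ⟨hx1, hx2⟩; exact ⟨x - s, by omega, by omega⟩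
  · rintro ⟨k, hk, rfl⟩; omega

lemma prec_iff (A : Finset ℕ) (r s : ℕ) (hcard : A.card = r) (h1 : 1 ≤ s) (hsr : s ≤ r) :
    SetPrec A (Finset.Icc s (2 * s - 1)) ↔ nthEl A s ≤ 2 * s - 1 := by
  have hmono : StrictMono (fun k => s + k) := fun a b h => by dsimp only; omega
  have hc : (Finset.Icc s (2 * s - 1)).card = s := by rw [Nat.card_Icc]; omega
  constructor
  · rintro ⟨-, h⟩
    have := h s (by rw [hc]; simp [Finset.mem_Icc, h1])
    rwa [Icc_eq_image s h1, nthEl_image _ hmono s s h1 le_rfl,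
      show s + (s - 1) = 2 * s - 1 by omega] at this
  · intro hle
    refine ⟨by omega, fun i hi => ?_⟩
    rw [hc, Finset.mem_Icc] at hi
    have hgap : nthEl A i + (s - i) ≤ nthEl A s :=
      nthEl_gap A i s hi.1 hi.2 (by omega)
    rw [Icc_eq_image s h1, nthEl_image _ hmono s i hi.1 hi.2]
    omega

/-- Lemma `l.intcond3`: for `A ∈ Binom([n],r)` with `n ≥ 2r`, there is
`1 ≤ s ≤ r` with `A ≺ [s, 2s−1]` iff the pair `A, A` is cross intersecting. -/
theorem prec_interval_iff_self_cross_intersecting (n r : ℕ) (hn : 2 * r ≤ n)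
    (A : Finset ℕ) (hA : A ∈ binomF n r) :
    (∃ s : ℕ, 1 ≤ s ∧ s ≤ r ∧ SetPrec A (Finset.Icc s (2 * s - 1))) ↔
      CrossInt n r A A := by
  rw [binomF, Finset.mem_powersetCard] at hA
  obtain ⟨hAsub, hAcard⟩ := hA
  constructor
  · rintro ⟨s, hs1, hsr, hprec⟩
    intro C hC D hD hCA hDA
    rw [binomF, Finset.mem_powersetCard] at hC hD
    have hub : ∀ (E : Finset ℕ), E.card = r → SetLE E A → ∀ i, 1 ≤ i → i ≤ s →
        nthEl E i ≤ 2 * s - 1 := by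
      intro E hEc hEA i hi1 his
      have h1 : nthEl E i ≤ nthEl A i := hEA.2 i (by rw [hEc, Finset.mem_Icc]; omega)
      have h2 : nthEl A i ≤ nthEl (Finset.Icc s (2 * s - 1)) i := by
        apply hprec.2
        rw [Finset.mem_Icc, Nat.card_Icc]; omega
      have hmono : StrictMono (fun k => s + k) := fun a b h => by dsimp only; omega
      rw [Icc_eq_image s hs1, nthEl_image _ hmono s i hi1 his] at h2
      omega
    set C' := C.1.filter (fun x => x ≤ 2 * s - 1) with hC'
    set D' := D.1.filter (fun x => x ≤ 2 * s - 1) with hD'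
    have key : ∀ (E : Finset ℕ), E ⊆ Finset.Icc 1 n → E.card = r → SetLE E A →
        s ≤ (E.filter (fun x => x ≤ 2 * s - 1)).card := by
      intro E hEsub hEc hEA
      have : (Finset.Icc 1 s).card ≤ (E.filter (fun x => x ≤ 2 * s - 1)).card := by
        apply Finset.card_le_card_of_injOn (fun i => nthEl E i)
        · intro i hi
          rw [Finset.mem_coe, Finset.mem_Icc] at hi
          rw [Finset.mem_coe, Finset.mem_filter]
          exact ⟨nthEl_mem E i hi.1 (by omega), hub E hEc hEA i hi.1 hi.2⟩
        · intro i hi j hj hij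
          simp only [Finset.coe_Icc, Set.mem_Icc] at hi hj
          by_contra hne
          rcases Nat.lt_or_ge i j with h | h
          · exact absurd hij (Nat.ne_of_lt (nthEl_lt E i j hi.1 h (by omega)))
          · have : j < i := by omega
            exact absurd hij.symm (Nat.ne_of_lt (nthEl_lt E j i hj.1 this (by omega)))
      rwa [Nat.card_Icc, show s + 1 - 1 = s by omega] at this
    have hCs : s ≤ (C.filter (fun x => x ≤ 2 * s - 1)).card := key C hC.1 hC.2 hCA
    have hDs : s ≤ (D.filter (fun x => x ≤ 2 * s - 1)).card := key D hD.1 hD.2 hDA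
    set Cf := C.filter (fun x => x ≤ 2 * s - 1) with hCf
    set Df := D.filter (fun x => x ≤ 2 * s - 1) with hDf
    have hsubC : Cf ⊆ Finset.Icc 1 (2 * s - 1) := by
      intro x hx
      rw [hCf, Finset.mem_filter] at hx
      have := hC.1 hx.1
      rw [Finset.mem_Icc] at this ⊢
      omega
    have hsubD : Df ⊆ Finset.Icc 1 (2 * s - 1) := by
      intro x hx
      rw [hDf, Finset.mem_filter] at hx
      have := hD.1 hx.1
      rw [Finset.mem_Icc] at this ⊢
      omega
    have hunion : (Cf ∪ Df).card ≤ 2 * s - 1 := by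
      have := Finset.card_le_card (Finset.union_subset hsubC hsubD)
      rwa [Nat.card_Icc, show 2 * s - 1 + 1 - 1 = 2 * s - 1 by omega] at this
    have hic := Finset.card_union_add_card_inter Cf Df
    have hnonempty : (Cf ∩ Df).Nonempty := by
      rw [← Finset.card_pos]
      omega
    obtain ⟨x, hx⟩ := hnonempty
    rw [Finset.mem_inter, hCf, hDf, Finset.mem_filter, Finset.mem_filter] at hx
    exact ⟨x, Finset.mem_inter.mpr ⟨hx.1.1, hx.2.1⟩⟩
  · intro hcross
    by_contra hno
    push_neg at hno
    have hlow : ∀ s, 1 ≤ s → s ≤ r → 2 * s ≤ nthEl A s := by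
      intro s hs1 hsr
      have := hno s hs1 hsr
      rw [prec_iff A r s hAcard hs1 hsr] at this
      omega
    have hoddmono : StrictMono (fun k => 2 * k + 1) := fun a b h => by dsimp only; omega
    have hevenmono : StrictMono (fun k => 2 * k + 2) := fun a b h => by dsimp only; omega
    set C := (Finset.range r).image (fun k => 2 * k + 1) with hCdef
    set D := (Finset.range r).image (fun k => 2 * k + 2) with hDdef
    have hCc : C.card = r := card_image_strictMono _ hoddmono r
    have hDc : D.card = r := card_image_strictMono _ hevenmono r
    have hCmem : C ∈ binomF n r := by
      rw [binomF, Finset.mem_powersetCard]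
      refine ⟨?_, hCc⟩
      intro x hx
      rw [hCdef, Finset.mem_image] at hx
      obtain ⟨k, hk, rfl⟩ := hx
      rw [Finset.mem_range] at hk
      rw [Finset.mem_Icc]
      omega
    have hDmem : D ∈ binomF n r := by
      rw [binomF, Finset.mem_powersetCard]
      refine ⟨?_, hDc⟩
      intro x hx
      rw [hDdef, Finset.mem_image] at hx
      obtain ⟨k, hk, rfl⟩ := hx
      rw [Finset.mem_range] at hk
      rw [Finset.mem_Icc]
      omega
    have hCA : SetLE C A := by
      refine ⟨by rw [hCc, hAcard], fun i hi => ?_⟩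
      rw [hCc, Finset.mem_Icc] at hi
      rw [hCdef, nthEl_image _ hoddmono r i hi.1 hi.2]
      have := hlow i hi.1 hi.2
      omega
    have hDA : SetLE D A := by
      refine ⟨by rw [hDc, hAcard], fun i hi => ?_⟩
      rw [hDc, Finset.mem_Icc] at hi
      rw [hDdef, nthEl_image _ hevenmono r i hi.1 hi.2]
      have := hlow i hi.1 hi.2
      omega
    obtain ⟨x, hx⟩ := hcross C hCmem D hDmem hCA hDA
    rw [Finset.mem_inter, hCdef, hDdef, Finset.mem_image, Finset.mem_image] at hx
    obtain ⟨⟨k, -, hk⟩, ⟨j, -, hj⟩⟩ := hx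
    omega
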